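/- arXiv:2508.08658 — 3 statements merged into one kernel-verified Lean document; each statement's English description precedes it below -/
import Mathlib

section
/- In the above setup, for every t ∈ ℕ the dual iterates of Algorithm 1 satisfy the uniform disagreement bound Σ_{i=1}^M ‖λ_i^{t+1} − (1/M)Σ_{j=1}^M λ_j^{t+1}‖² ≤ 4β²ψ̃²M/ε̃³, where ε̃ := 1 − κ̃ > 0. -/
/-!
Since `Ẽ` is doubly stochastic, gossiping preserves the mean of the dual variables and acts on
their deviations from the mean as `A = Ẽ - 𝟙𝟙ᵀ/M`, applied coordinatewise, so it contracts the
stacked deviation `δ_t` by `r = ‖A‖ = √κ̃ < 1`. With `|1 - βθ| ≤ 1` and `‖(g̃_i)_i‖ ≤ √M ψ̃`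
this gives `‖δ_{t+1}‖ ≤ r (‖δ_t‖ + β √M ψ̃)`, hence `‖δ_t‖ ≤ r β √M ψ̃ / (1 - r)` for all `t`.
Finally `ε̃ = (1 - r)(1 + r) ≤ 2 (1 - r)` and `ε̃ ≤ 1` turn the square of this bound into
`4 β² ψ̃² M / ε̃³`.
-/

open Finset

theorem norm_toLp_sum_smul_le {ι m n : Type*} [Fintype ι] [Fintype m] [Fintype n] [DecidableEq n]
    (A : Matrix m n ℝ) (v : PiLp 2 fun _ : n => EuclideanSpace ℝ ι) :
    ‖WithLp.toLp 2 fun i => ∑ j, A i j • v j‖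
      ≤ ‖LinearMap.toContinuousLinearMap (Matrix.toEuclideanLin A)‖ * ‖v‖ := by
  set T := LinearMap.toContinuousLinearMap (Matrix.toEuclideanLin A)
  let u : ι → EuclideanSpace ℝ n := fun k => WithLp.toLp 2 fun j => v j k
  have hTu : ∀ k i, T (u k) i = (∑ j, A i j • v j) k := by
    simp [T, u, Matrix.mulVec, dotProduct]
  have hsq : ‖WithLp.toLp 2 fun i => ∑ j, A i j • v j‖ ^ 2 ≤ (‖T‖ * ‖v‖) ^ 2 :=
    calc _ = ∑ k, ‖T (u k)‖ ^ 2 := by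
          simp only [PiLp.norm_sq_eq_of_L2, Real.norm_eq_abs, sq_abs, hTu]
          exact sum_comm
      _ ≤ ∑ k, (‖T‖ * ‖u k‖) ^ 2 := by
          gcongr with k
          exact T.le_opNorm (u k)
      _ = (‖T‖ * ‖v‖) ^ 2 := by
          simp only [mul_pow, ← mul_sum, PiLp.norm_sq_eq_of_L2, Real.norm_eq_abs, sq_abs, u]
          rw [sum_comm]
  exact (pow_le_pow_iff_left₀ (norm_nonneg _) (by positivity) two_ne_zero).mp hsq

theorem PiLp.norm_toLp_le_sqrt_card_mul {ι β : Type*} [Fintype ι] [SeminormedAddCommGroup β]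
    (f : ι → β) {c : ℝ} (hc : 0 ≤ c) (hf : ∀ i, ‖f i‖ ≤ c) :
    ‖WithLp.toLp 2 f‖ ≤ √(Fintype.card ι) * c := by
  rw [PiLp.norm_eq_of_L2, ← Real.sqrt_sq hc, ← Real.sqrt_mul (Nat.cast_nonneg _)]
  refine Real.sqrt_le_sqrt ?_
  calc ∑ i, ‖f i‖ ^ 2 ≤ ∑ _i : ι, c ^ 2 := by gcongr with i; exact hf i
    _ = Fintype.card ι * c ^ 2 := by simp

theorem le_mul_div_one_sub_of_le_mul_add {x : ℕ → ℝ} {r C : ℝ} (hr0 : 0 ≤ r) (hr1 : r < 1)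
    (h0 : x 0 ≤ r * C / (1 - r)) (hstep : ∀ t, x (t + 1) ≤ r * (x t + C)) :
    ∀ t, x t ≤ r * C / (1 - r)
  | 0 => h0
  | t + 1 =>
    calc x (t + 1) ≤ r * (x t + C) := hstep t
      _ ≤ r * (r * C / (1 - r) + C) := by
          gcongr
          exact le_mul_div_one_sub_of_le_mul_add hr0 hr1 h0 hstep t
      _ = r * C / (1 - r) := by
          field_simp [(sub_pos.mpr hr1).ne']
          ring

theorem sq_mul_div_one_sub_le {r C : ℝ} (hr0 : 0 ≤ r) (hr1 : r < 1) :
    (r * C / (1 - r)) ^ 2 ≤ 4 * C ^ 2 / (1 - r ^ 2) ^ 3 := by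
  have h1r : 0 < 1 - r := by linarith
  have hr2 : r ^ 2 ≤ 1 := by nlinarith
  have hfac : 1 - r ^ 2 = (1 - r) * (1 + r) := by ring
  have key : r ^ 2 * ((1 + r) ^ 3 * (1 - r)) ≤ 4 := by
    have h4 : (1 + r) ^ 2 * (1 - r ^ 2) ≤ 4 := by nlinarith
    calc r ^ 2 * ((1 + r) ^ 3 * (1 - r)) = r ^ 2 * ((1 + r) ^ 2 * (1 - r ^ 2)) := by ring
      _ ≤ 1 * 4 := by gcongr
      _ = 4 := one_mul 4
  rw [div_pow, div_le_div_iff₀ (by positivity) (by rw [hfac]; positivity), hfac]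
  calc (r * C) ^ 2 * ((1 - r) * (1 + r)) ^ 3
      = C ^ 2 * (1 - r) ^ 2 * (r ^ 2 * ((1 + r) ^ 3 * (1 - r))) := by ring
    _ ≤ C ^ 2 * (1 - r) ^ 2 * 4 := by gcongr
    _ = 4 * C ^ 2 * (1 - r) ^ 2 := by ring

section Consensus

variable {V : Type*} [AddCommGroup V] [Module ℝ V]

theorem sum_smul_add_const_of_sum_eq_zero {n : Type*} [Fintype n] {a : n → ℝ} (ha : ∑ j, a j = 0)
    (v : n → V) (c : V) : ∑ j, a j • (v j + c) = ∑ j, a j • v j := by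
  simp only [smul_add, sum_add_distrib, ← sum_smul, ha, zero_smul, add_zero]

variable {M : ℕ}

noncomputable def deviationFromMean (v : Fin M → V) (i : Fin M) : V := v i - (M : ℝ)⁻¹ • ∑ j, v j

theorem deviationFromMean_sum_smul_eq {E : Matrix (Fin M) (Fin M) ℝ} (hcol : ∀ j, ∑ i, E i j = 1)
    (v : Fin M → V) (i : Fin M) :
    deviationFromMean (fun i => ∑ j, E i j • v j) i
      = ∑ j, (E - Matrix.of fun _ _ => (M : ℝ)⁻¹ : Matrix (Fin M) (Fin M) ℝ) i j • v j := by
  have hsum : ∑ i, ∑ j, E i j • v j = ∑ j, v j := by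
    rw [sum_comm]
    simp only [← sum_smul, hcol, one_smul]
  simp [deviationFromMean, hsum, sub_smul, smul_sum]

theorem sum_sub_inv_apply_eq_zero {E : Matrix (Fin M) (Fin M) ℝ} {i : Fin M}
    (hrow : ∑ j, E i j = 1) :
    ∑ j, (E - Matrix.of fun _ _ => (M : ℝ)⁻¹ : Matrix (Fin M) (Fin M) ℝ) i j = 0 := by
  have hM : (M : ℝ) ≠ 0 := Nat.cast_ne_zero.mpr i.pos.ne'
  simp [sum_sub_distrib, hrow, hM]

theorem deviationFromMean_sum_smul_smul_add {E : Matrix (Fin M) (Fin M) ℝ}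
    (hrow : ∀ i, ∑ j, E i j = 1) (hcol : ∀ j, ∑ i, E i j = 1) (a b : ℝ) (x y : Fin M → V)
    (i : Fin M) :
    deviationFromMean (fun i => ∑ j, E i j • (a • x j + b • y j)) i
      = ∑ j, (E - Matrix.of fun _ _ => (M : ℝ)⁻¹ : Matrix (Fin M) (Fin M) ℝ) i j
          • (a • deviationFromMean x j + b • y j) := by
  have hshift : ∀ j, a • x j + b • y j
      = (a • deviationFromMean x j + b • y j) + a • ((M : ℝ)⁻¹ • ∑ k, x k) := by
    intro j
    simp only [deviationFromMean, smul_sub]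
    abel
  simp only [hshift, deviationFromMean_sum_smul_eq hcol]
  exact sum_smul_add_const_of_sum_eq_zero (sum_sub_inv_apply_eq_zero (hrow i)) _ _

theorem norm_deviationFromMean_sum_smul_smul_add_le {ι : Type*} [Fintype ι]
    {E : Matrix (Fin M) (Fin M) ℝ}
    (hrow : ∀ i, ∑ j, E i j = 1) (hcol : ∀ j, ∑ i, E i j = 1) {a b ψ : ℝ} (ha : |a| ≤ 1)
    (hb : 0 ≤ b) (hψ : 0 ≤ ψ) (x y : Fin M → EuclideanSpace ℝ ι) (hy : ∀ j, ‖y j‖ ≤ ψ) :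
    ‖WithLp.toLp 2 (deviationFromMean fun i => ∑ j, E i j • (a • x j + b • y j))‖
      ≤ ‖LinearMap.toContinuousLinearMap
          (Matrix.toEuclideanLin (E - Matrix.of fun _ _ => (M : ℝ)⁻¹))‖
        * (‖WithLp.toLp 2 (deviationFromMean x)‖ + b * (√M * ψ)) := by
  set u := WithLp.toLp 2 (deviationFromMean x)
  set w := WithLp.toLp 2 y
  have hw : ‖w‖ ≤ √M * ψ := by simpa using PiLp.norm_toLp_le_sqrt_card_mul y hψ hy
  have hu : ‖a • u + b • w‖ ≤ ‖u‖ + b * (√M * ψ) :=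
    calc ‖a • u + b • w‖ ≤ |a| * ‖u‖ + b * ‖w‖ := by
          simpa [norm_smul, abs_of_nonneg hb] using norm_add_le (a • u) (b • w)
      _ ≤ 1 * ‖u‖ + b * (√M * ψ) := by gcongr
      _ = ‖u‖ + b * (√M * ψ) := by rw [one_mul]
  calc _ = ‖WithLp.toLp 2 fun i =>
          ∑ j, (E - Matrix.of fun _ _ => (M : ℝ)⁻¹ : Matrix (Fin M) (Fin M) ℝ) i j
            • (a • u + b • w) j‖ := by
        congr 2
        funext i
        exact deviationFromMean_sum_smul_smul_add hrow hcol a b x y i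
    _ ≤ _ := (norm_toLp_sum_smul_le _ _).trans (mul_le_mul_of_nonneg_left hu (norm_nonneg _))

end Consensus

theorem attack_free_dual_disagreement_bound_general
    (d M : ℕ)
    (β θ : ℝ) (hβ : 0 ≤ β) (hθ : 0 ≤ θ) (hβθ : β * θ ≤ 2)
    (ψt : ℝ) (hψt : 0 ≤ ψt)
    (Et : Matrix (Fin M) (Fin M) ℝ)
    (hErow : ∀ i, ∑ j, Et i j = 1)
    (hEcol : ∀ j, ∑ i, Et i j = 1)
    (κt : ℝ)
    (hκt : κt = ‖LinearMap.toContinuousLinearMap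
        (Matrix.toEuclideanLin (Et - Matrix.of fun _ _ => (M : ℝ)⁻¹))‖ ^ 2)
    (hκtlt : κt < 1)
    (εt : ℝ) (hεt : εt = 1 - κt)
    (g : Fin M → ℕ → EuclideanSpace ℝ (Fin d))
    (hg : ∀ i t, ‖g i t‖ ≤ ψt)
    (lam lamhalf : Fin M → ℕ → EuclideanSpace ℝ (Fin d))
    (hlam0 : ∀ i, lam i 0 = 0)
    (hlamhalf : ∀ i t, lamhalf i t = (1 - β * θ) • lam i t + β • g i t)
    (hlamstep : ∀ i t, lam i (t + 1) = ∑ j, Et i j • lamhalf j t) :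
    ∀ t, ∑ i, ‖lam i (t + 1) - (M : ℝ)⁻¹ • ∑ j, lam j (t + 1)‖ ^ 2
      ≤ 4 * β ^ 2 * ψt ^ 2 * (M : ℝ) / εt ^ 3 := by
  set r := ‖LinearMap.toContinuousLinearMap
    (Matrix.toEuclideanLin (Et - Matrix.of fun _ _ => (M : ℝ)⁻¹))‖
  have hr0 : 0 ≤ r := norm_nonneg _
  have hr1 : r < 1 := by nlinarith
  set C := β * (√M * ψt)
  let δ : ℕ → PiLp 2 fun _ : Fin M => EuclideanSpace ℝ (Fin d) := fun t =>
    WithLp.toLp 2 (deviationFromMean fun i => lam i t)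
  have hstep : ∀ t, ‖δ (t + 1)‖ ≤ r * (‖δ t‖ + C) := by
    intro t
    have hlam : (fun i => lam i (t + 1))
        = fun i => ∑ j, Et i j • ((1 - β * θ) • lam j t + β • g j t) := by
      funext i
      simp only [hlamstep, hlamhalf]
    have hβθ' : |1 - β * θ| ≤ 1 := abs_le.mpr ⟨by linarith, by nlinarith⟩
    simpa only [δ, hlam] using norm_deviationFromMean_sum_smul_smul_add_le hErow hEcol hβθ' hβ
      hψt (fun j => lam j t) (fun j => g j t) fun j => hg j t
  have hδ0 : δ 0 = 0 := by
    ext1 i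
    simp [δ, deviationFromMean, hlam0]
  have h0 : ‖δ 0‖ ≤ r * C / (1 - r) := by
    rw [hδ0, norm_zero]
    exact div_nonneg (by positivity) (sub_pos.mpr hr1).le
  intro t
  calc ∑ i, ‖lam i (t + 1) - (M : ℝ)⁻¹ • ∑ j, lam j (t + 1)‖ ^ 2 = ‖δ (t + 1)‖ ^ 2 := by
        rw [PiLp.norm_sq_eq_of_L2]
        rfl
    _ ≤ (r * C / (1 - r)) ^ 2 := by
        gcongr
        exact le_mul_div_one_sub_of_le_mul_add (x := fun t => ‖δ t‖) hr0 hr1 h0 hstep _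
    _ ≤ 4 * C ^ 2 / (1 - r ^ 2) ^ 3 := sq_mul_div_one_sub_le hr0 hr1
    _ = 4 * β ^ 2 * ψt ^ 2 * (M : ℝ) / εt ^ 3 := by
        rw [hεt, hκt]
        simp only [C, mul_pow, Real.sq_sqrt (Nat.cast_nonneg M)]
        ring

/-- **Uniform disagreement bound for the dual iterates of the attack-free
Algorithm 1 (Lemma 8).** -/
theorem attack_free_dual_disagreement_bound
    (d M : ℕ) (hM : 1 ≤ M)
    (β θ : ℝ) (hβ : 0 ≤ β) (hθ : 0 ≤ θ) (hβθ : β * θ ≤ 2)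
    (ψt : ℝ) (hψt : 0 ≤ ψt)
    (Et : Matrix (Fin M) (Fin M) ℝ)
    (hEnn : ∀ i j, 0 ≤ Et i j)
    (hErow : ∀ i, ∑ j, Et i j = 1)
    (hEcol : ∀ j, ∑ i, Et i j = 1)
    (κt : ℝ)
    (hκt : κt = ‖LinearMap.toContinuousLinearMap
        (Matrix.toEuclideanLin (Et - Matrix.of fun _ _ => (M : ℝ)⁻¹))‖ ^ 2)
    (hκtlt : κt < 1)
    (εt : ℝ) (hεt : εt = 1 - κt)
    (g : Fin M → ℕ → EuclideanSpace ℝ (Fin d))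
    (hg : ∀ i t, ‖g i t‖ ≤ ψt)
    (lam lamhalf : Fin M → ℕ → EuclideanSpace ℝ (Fin d))
    (hlam0 : ∀ i, lam i 0 = 0)
    (hlamhalf : ∀ i t, lamhalf i t = (1 - β * θ) • lam i t + β • g i t)
    (hlamstep : ∀ i t, lam i (t + 1) = ∑ j, Et i j • lamhalf j t) :
    ∀ t, ∑ i, ‖lam i (t + 1) - (M : ℝ)⁻¹ • ∑ j, lam j (t + 1)‖ ^ 2
      ≤ 4 * β ^ 2 * ψt ^ 2 * (M : ℝ) / εt ^ 3 :=
  attack_free_dual_disagreement_bound_general d M β θ hβ hθ hβθ ψt hψt Et hErow hEcol κt hκt hκtlt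
    εt hεt g hg lam lamhalf hlam0 hlamhalf hlamstep
end

section
/- If ‖λ̄‖ ≤ C, then Σ_{j∈S} e_j ‖y_j − ȳ‖² ≤ Σ_{j∈S} e_j ‖λ_j − λ̄‖² − Σ_{j∈S^c} e_j (‖λ_j‖ − C)². -/
/-- The clipping operator `clip_C(v) = min(1, C/‖v‖)·v` (with `clip_C(0) = 0`,
since in Lean `C/0 = 0`). -/
noncomputable def clip {E : Type*} [NormedAddCommGroup E] [InnerProductSpace ℝ E]
    (C : ℝ) (v : E) : E := min 1 (C / ‖v‖) • v

/-!
Clipping is the metric projection onto the ball of radius `C`, which contains `λ̄`. For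
`‖λ_j‖ > C` the projection inequality gives `‖y_j - λ̄‖² + (‖λ_j‖ - C)² ≤ ‖λ_j - λ̄‖²`, and
otherwise `y_j = λ_j`. Averaging with the weights `e_j` and using that the weighted mean `ȳ`
minimises `c ↦ Σ e_j ‖y_j - c‖²` gives the claim.
-/

open Finset

section WeightedVariance

variable {E : Type*} [NormedAddCommGroup E] [InnerProductSpace ℝ E]
  {ι : Type*} {S : Finset ι} {e : ι → ℝ}

theorem sum_mul_norm_sub_sq_eq_add (hsum : ∑ j ∈ S, e j = 1) (y : ι → E) (c : E) :
    ∑ j ∈ S, e j * ‖y j - c‖ ^ 2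
      = ∑ j ∈ S, e j * ‖y j - ∑ k ∈ S, e k • y k‖ ^ 2 + ‖∑ k ∈ S, e k • y k - c‖ ^ 2 := by
  set ybar := ∑ k ∈ S, e k • y k
  have hcentered : ∑ j ∈ S, e j * inner ℝ (y j - ybar) (ybar - c) = 0 := by
    have : ∑ j ∈ S, e j • (y j - ybar) = 0 := by
      simp only [smul_sub, sum_sub_distrib, ← sum_smul, hsum, one_smul, ybar, sub_self]
    simp only [← real_inner_smul_left, ← sum_inner, this, inner_zero_left]
  calc ∑ j ∈ S, e j * ‖y j - c‖ ^ 2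
      = ∑ j ∈ S, (e j * ‖y j - ybar‖ ^ 2 + 2 * (e j * inner ℝ (y j - ybar) (ybar - c))
          + e j * ‖ybar - c‖ ^ 2) := by
        refine sum_congr rfl fun j _ => ?_
        rw [← sub_add_sub_cancel (y j) ybar c, norm_add_sq_real]
        ring
    _ = _ := by
        rw [sum_add_distrib, sum_add_distrib, ← mul_sum, hcentered, ← sum_mul, hsum]
        ring

theorem sum_mul_norm_sub_wmean_sq_le (hsum : ∑ j ∈ S, e j = 1) (y : ι → E) (c : E) :
    ∑ j ∈ S, e j * ‖y j - ∑ k ∈ S, e k • y k‖ ^ 2 ≤ ∑ j ∈ S, e j * ‖y j - c‖ ^ 2 := by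
  rw [sum_mul_norm_sub_sq_eq_add hsum y c]
  exact le_add_of_nonneg_right (sq_nonneg _)

end WeightedVariance

section Clip

variable {E : Type*} [NormedAddCommGroup E] [InnerProductSpace ℝ E] {C : ℝ} {v : E}

theorem clip_of_norm_le (h : ‖v‖ ≤ C) : clip C v = v := by
  rcases eq_or_ne v 0 with rfl | hv
  · simp [clip]
  · rw [clip, min_eq_left ((one_le_div (norm_pos_iff.2 hv)).2 h), one_smul]

theorem clip_of_le_norm (h : C ≤ ‖v‖) : clip C v = (C / ‖v‖) • v := by
  rw [clip, min_eq_right (div_le_one_of_le₀ h (norm_nonneg v))]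

theorem norm_smul_sub_sq_add_sq_le {t : ℝ} {m : E} (ht : t ≤ 1) (hm : ‖m‖ ≤ t * ‖v‖) :
    ‖t • v - m‖ ^ 2 + ((1 - t) * ‖v‖) ^ 2 ≤ ‖v - m‖ ^ 2 := by
  have hinner : inner ℝ v m ≤ t * ‖v‖ ^ 2 :=
    calc inner ℝ v m ≤ ‖v‖ * ‖m‖ := real_inner_le_norm v m
      _ ≤ ‖v‖ * (t * ‖v‖) := mul_le_mul_of_nonneg_left hm (norm_nonneg v)
      _ = t * ‖v‖ ^ 2 := by ring
  rw [norm_sub_sq_real, norm_sub_sq_real, norm_smul, real_inner_smul_left, Real.norm_eq_abs,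
    mul_pow, sq_abs]
  -- the right side minus the left side is `2 (1 - t) (t‖v‖² - ⟪v, m⟫)`
  nlinarith [mul_le_mul_of_nonneg_left hinner (sub_nonneg.2 ht)]

theorem norm_clip_sub_sq_add_sq_le {m : E} (hm : ‖m‖ ≤ C) (hv : C < ‖v‖) :
    ‖clip C v - m‖ ^ 2 + (‖v‖ - C) ^ 2 ≤ ‖v - m‖ ^ 2 := by
  have hv₀ : ‖v‖ ≠ 0 := ((norm_nonneg m).trans_lt (hm.trans_lt hv)).ne'
  have hscale : C / ‖v‖ * ‖v‖ = C := div_mul_cancel₀ C hv₀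
  have h := norm_smul_sub_sq_add_sq_le (div_le_one_of_le₀ hv.le (norm_nonneg v))
    (by rwa [hscale] : ‖m‖ ≤ C / ‖v‖ * ‖v‖)
  rwa [← clip_of_le_norm hv.le, sub_mul, one_mul, hscale] at h

end Clip

theorem clipping_variance_reduction_small_mean_general
    {E : Type*} [NormedAddCommGroup E] [InnerProductSpace ℝ E]
    {ι : Type*} (S : Finset ι)
    (e : ι → ℝ) (he : ∀ j ∈ S, 0 ≤ e j) (hsum : ∑ j ∈ S, e j = 1)
    (lam : ι → E) (C : ℝ)
    (hmean : ‖∑ j ∈ S, e j • lam j‖ ≤ C) :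
    ∑ j ∈ S, e j * ‖clip C (lam j) - ∑ k ∈ S, e k • clip C (lam k)‖ ^ 2
      ≤ ∑ j ∈ S, e j * ‖lam j - ∑ k ∈ S, e k • lam k‖ ^ 2
        - ∑ j ∈ S.filter (fun j => C < ‖lam j‖), e j * (‖lam j‖ - C) ^ 2 := by
  set lbar := ∑ k ∈ S, e k • lam k
  calc _ ≤ ∑ j ∈ S, e j * ‖clip C (lam j) - lbar‖ ^ 2 :=
        sum_mul_norm_sub_wmean_sq_le hsum _ lbar
    _ ≤ ∑ j ∈ S, e j * (‖lam j - lbar‖ ^ 2 - if C < ‖lam j‖ then (‖lam j‖ - C) ^ 2 else 0) := by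
        refine sum_le_sum fun j hj => mul_le_mul_of_nonneg_left ?_ (he j hj)
        split_ifs with hj'
        · linarith [norm_clip_sub_sq_add_sq_le hmean hj']
        · rw [clip_of_norm_le (not_lt.1 hj'), sub_zero]
    _ = _ := by
        rw [sum_filter, ← sum_sub_distrib]
        simp only [mul_sub, mul_ite, mul_zero]

/-- **Variance-reduction property of clipping, case ‖λ̄‖ ≤ C
(Lemma, Case 1).** -/
theorem clipping_variance_reduction_small_mean
    {E : Type*} [NormedAddCommGroup E] [InnerProductSpace ℝ E]
    {ι : Type*} [DecidableEq ι] (S : Finset ι) (hS : S.Nonempty)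
    (e : ι → ℝ) (he : ∀ j ∈ S, 0 ≤ e j) (hsum : ∑ j ∈ S, e j = 1)
    (lam : ι → E) (C : ℝ) (hC : 0 ≤ C)
    (hmean : ‖∑ j ∈ S, e j • lam j‖ ≤ C) :
    ∑ j ∈ S, e j * ‖clip C (lam j) - ∑ k ∈ S, e k • clip C (lam k)‖ ^ 2
      ≤ ∑ j ∈ S, e j * ‖lam j - ∑ k ∈ S, e k • lam k‖ ^ 2
        - ∑ j ∈ S.filter (fun j => C < ‖lam j‖), e j * (‖lam j‖ - C) ^ 2 :=
  clipping_variance_reduction_small_mean_general S e he hsum lam C hmean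
end

section
/- If Σ_{j∈S^c} e_j < 1, then the bias introduced by clipping satisfies ‖λ̄ − ȳ‖² ≤ (Σ_{j∈S^c} e_j)/(1 − Σ_{j∈S^c} e_j)·Σ_{j∈S} e_j ‖λ_j − λ̄‖². -/
lemma clip_eq_self {E : Type*} [NormedAddCommGroup E] [InnerProductSpace ℝ E]
    {C : ℝ} {v : E} (hv : ‖v‖ ≤ C) : clip C v = v := by
  rcases eq_or_ne v 0 with rfl | h
  · simp [clip]
  · have hv0 : 0 < ‖v‖ := norm_pos_iff.mpr h
    have : (1 : ℝ) ≤ C / ‖v‖ := (one_le_div hv0).mpr hv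
    simp [clip, min_eq_left this]

lemma clip_of_gt {E : Type*} [NormedAddCommGroup E] [InnerProductSpace ℝ E]
    {C : ℝ} {v : E} (hC : 0 ≤ C) (hv : C < ‖v‖) : clip C v = (C / ‖v‖) • v := by
  have hv0 : 0 < ‖v‖ := lt_of_le_of_lt hC hv
  have : C / ‖v‖ ≤ 1 := (div_le_one hv0).mpr hv.le
  simp [clip, min_eq_right this]

lemma norm_clip_le {E : Type*} [NormedAddCommGroup E] [InnerProductSpace ℝ E]
    {C : ℝ} (hC : 0 ≤ C) (v : E) : ‖clip C v‖ ≤ C := by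
  rcases le_or_gt ‖v‖ C with h | h
  · rw [clip_eq_self h]; exact h
  · have hv0 : 0 < ‖v‖ := lt_of_le_of_lt hC h
    rw [clip_of_gt hC h, norm_smul, Real.norm_eq_abs,
      abs_of_nonneg (div_nonneg hC hv0.le), div_mul_cancel₀ _ hv0.ne']

/-- **Bias-of-clipping lemma.** -/
theorem clipping_bias_bound
    {E : Type*} [NormedAddCommGroup E] [InnerProductSpace ℝ E]
    {ι : Type*} [DecidableEq ι] (S : Finset ι) (hS : S.Nonempty)
    (e : ι → ℝ) (he : ∀ j ∈ S, 0 ≤ e j) (hsum : ∑ j ∈ S, e j = 1)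
    (lam : ι → E) (C : ℝ) (hC : 0 ≤ C)
    (hc : ∑ j ∈ S.filter (fun j => C < ‖lam j‖), e j < 1) :
    ‖(∑ j ∈ S, e j • lam j) - ∑ j ∈ S, e j • clip C (lam j)‖ ^ 2
      ≤ (∑ j ∈ S.filter (fun j => C < ‖lam j‖), e j)
          / (1 - ∑ j ∈ S.filter (fun j => C < ‖lam j‖), e j)
        * ∑ j ∈ S, e j * ‖lam j - ∑ k ∈ S, e k • lam k‖ ^ 2 := by
  classical
  set T := S.filter (fun j => C < ‖lam j‖) with hT
  set lbar : E := ∑ k ∈ S, e k • lam k with hlbar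
  set ybar : E := ∑ j ∈ S, e j • clip C (lam j) with hybar
  set p : ℝ := ∑ j ∈ T, e j with hp
  set V : ℝ := ∑ j ∈ S, e j * ‖lam j - lbar‖ ^ 2 with hV
  set b : E := lbar - ybar with hb
  have hTsub : T ⊆ S := Finset.filter_subset _ _
  have hp0 : 0 ≤ p := Finset.sum_nonneg fun j hj => he j (hTsub hj)
  have h1p : 0 < 1 - p := by linarith
  have hV0 : 0 ≤ V := Finset.sum_nonneg fun j hj =>
    mul_nonneg (he j hj) (by positivity)
  -- ‖ybar‖ ≤ C
  have hybarC : ‖ybar‖ ≤ C := by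
    calc ‖ybar‖ ≤ ∑ j ∈ S, ‖e j • clip C (lam j)‖ := norm_sum_le _ _
    _ ≤ ∑ j ∈ S, e j * C := by
        refine Finset.sum_le_sum fun j hj => ?_
        rw [norm_smul, Real.norm_eq_abs, abs_of_nonneg (he j hj)]
        exact mul_le_mul_of_nonneg_left (norm_clip_le hC _) (he j hj)
    _ = C := by rw [← Finset.sum_mul, hsum, one_mul]
  -- bias supported on T
  have hbT : b = ∑ j ∈ T, e j • (lam j - clip C (lam j)) := by
    have : b = ∑ j ∈ S, e j • (lam j - clip C (lam j)) := by
      rw [hb, hlbar, hybar, ← Finset.sum_sub_distrib]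
      exact Finset.sum_congr rfl fun j hj => (smul_sub _ _ _).symm
    rw [this, hT]
    rw [Finset.sum_filter_of_ne]
    intro j hj hne
    by_contra h
    push_neg at h
    rw [clip_eq_self h, sub_self, smul_zero] at hne
    exact hne rfl
  -- Cauchy-Schwarz: ‖b‖² ≤ p * Σ_T e_j ‖λ_j - y_j‖²
  have hCS : ‖b‖ ^ 2 ≤ p * ∑ j ∈ T, e j * ‖lam j - clip C (lam j)‖ ^ 2 := by
    have h1 : ‖b‖ ≤ ∑ j ∈ T, Real.sqrt (e j) * (Real.sqrt (e j) * ‖lam j - clip C (lam j)‖) := by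
      rw [hbT]
      refine (norm_sum_le _ _).trans (le_of_eq ?_)
      refine Finset.sum_congr rfl fun j hj => ?_
      rw [norm_smul, Real.norm_eq_abs, abs_of_nonneg (he j (hTsub hj)),
        ← mul_assoc, Real.mul_self_sqrt (he j (hTsub hj))]
    have h3 : (∑ j ∈ T, Real.sqrt (e j) * (Real.sqrt (e j) * ‖lam j - clip C (lam j)‖)) ^ 2
        ≤ (∑ j ∈ T, Real.sqrt (e j) ^ 2) *
          ∑ j ∈ T, (Real.sqrt (e j) * ‖lam j - clip C (lam j)‖) ^ 2 :=
      Finset.sum_mul_sq_le_sq_mul_sq T _ _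
    have h4 : (∑ j ∈ T, Real.sqrt (e j) ^ 2) = p := by
      refine Finset.sum_congr rfl fun j hj => Real.sq_sqrt (he j (hTsub hj))
    have h5 : (∑ j ∈ T, (Real.sqrt (e j) * ‖lam j - clip C (lam j)‖) ^ 2)
        = ∑ j ∈ T, e j * ‖lam j - clip C (lam j)‖ ^ 2 := by
      refine Finset.sum_congr rfl fun j hj => ?_
      rw [mul_pow, Real.sq_sqrt (he j (hTsub hj))]
    have hnn : 0 ≤ ∑ j ∈ T, Real.sqrt (e j) * (Real.sqrt (e j) * ‖lam j - clip C (lam j)‖) :=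
      Finset.sum_nonneg fun j hj => by positivity
    calc ‖b‖ ^ 2 ≤ (∑ j ∈ T, Real.sqrt (e j) * (Real.sqrt (e j) * ‖lam j - clip C (lam j)‖)) ^ 2 :=
          pow_le_pow_left₀ (norm_nonneg _) h1 2
    _ ≤ _ := by rw [← h4, ← h5]; exact h3
  -- projection: ‖λ_j - y_j‖² ≤ ‖λ_j - ybar‖² for j ∈ T
  have hproj : ∀ j ∈ T, ‖lam j - clip C (lam j)‖ ^ 2 ≤ ‖lam j - ybar‖ ^ 2 := by
    intro j hj
    have hjC : C < ‖lam j‖ := (Finset.mem_filter.mp hj).2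
    have hv0 : 0 < ‖lam j‖ := lt_of_le_of_lt hC hjC
    set y := clip C (lam j) with hy
    have hyeq : y = (C / ‖lam j‖) • lam j := clip_of_gt hC hjC
    have hdiff : lam j - y = (1 - C / ‖lam j‖) • lam j := by
      rw [hyeq, sub_smul, one_smul]
    have hfac : 0 ≤ 1 - C / ‖lam j‖ := by
      have : C / ‖lam j‖ ≤ 1 := (div_le_one hv0).mpr hjC.le
      linarith
    have hinner : 0 ≤ @inner ℝ _ _ (lam j - y) (y - ybar) := by
      rw [hdiff, real_inner_smul_left]
      refine mul_nonneg hfac ?_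
      rw [inner_sub_right, hyeq, real_inner_smul_right, real_inner_self_eq_norm_sq]
      have h1 : @inner ℝ _ _ (lam j) ybar ≤ ‖lam j‖ * C := by
        calc @inner ℝ _ _ (lam j) ybar ≤ ‖lam j‖ * ‖ybar‖ := real_inner_le_norm _ _
        _ ≤ ‖lam j‖ * C := mul_le_mul_of_nonneg_left hybarC hv0.le
      have h2 : C / ‖lam j‖ * ‖lam j‖ ^ 2 = C * ‖lam j‖ := by
        field_simp
      rw [h2]
      linarith [h1]
    have hsplit : lam j - ybar = (lam j - y) + (y - ybar) := by abel
    rw [hsplit, norm_add_sq_real]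
    nlinarith [sq_nonneg ‖y - ybar‖, hinner]
  -- bias-variance decomposition
  have hdecomp : ∑ j ∈ S, e j * ‖lam j - ybar‖ ^ 2 = V + ‖b‖ ^ 2 := by
    have hzero : ∑ j ∈ S, e j • (lam j - lbar) = 0 := by
      rw [Finset.sum_congr rfl fun j hj => smul_sub (e j) (lam j) lbar,
        Finset.sum_sub_distrib, ← hlbar, ← Finset.sum_smul, hsum, one_smul, sub_self]
    have hterm : ∀ j ∈ S, e j * ‖lam j - ybar‖ ^ 2
        = e j * ‖lam j - lbar‖ ^ 2 + 2 * (e j * @inner ℝ _ _ (lam j - lbar) b) + e j * ‖b‖ ^ 2 := by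
      intro j hj
      have : lam j - ybar = (lam j - lbar) + b := by rw [hb]; abel
      rw [this, norm_add_sq_real]
      ring
    rw [Finset.sum_congr rfl hterm, Finset.sum_add_distrib, Finset.sum_add_distrib]
    have e1 : ∑ j ∈ S, 2 * (e j * @inner ℝ _ _ (lam j - lbar) b) = 0 := by
      rw [← Finset.mul_sum]
      have : ∑ j ∈ S, e j * @inner ℝ _ _ (lam j - lbar) b
          = @inner ℝ _ _ (∑ j ∈ S, e j • (lam j - lbar)) b := by
        rw [sum_inner]
        exact Finset.sum_congr rfl fun j hj => (real_inner_smul_left _ _ _).symm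
      rw [this, hzero, inner_zero_left, mul_zero]
    have e2 : ∑ j ∈ S, e j * ‖b‖ ^ 2 = ‖b‖ ^ 2 := by
      rw [← Finset.sum_mul, hsum, one_mul]
    rw [e1, e2, add_zero, ← hV]
  -- combine
  have hchain : ‖b‖ ^ 2 ≤ p * (V + ‖b‖ ^ 2) := by
    calc ‖b‖ ^ 2 ≤ p * ∑ j ∈ T, e j * ‖lam j - clip C (lam j)‖ ^ 2 := hCS
    _ ≤ p * ∑ j ∈ T, e j * ‖lam j - ybar‖ ^ 2 := by
        refine mul_le_mul_of_nonneg_left (Finset.sum_le_sum fun j hj => ?_) hp0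
        exact mul_le_mul_of_nonneg_left (hproj j hj) (he j (hTsub hj))
    _ ≤ p * ∑ j ∈ S, e j * ‖lam j - ybar‖ ^ 2 := by
        refine mul_le_mul_of_nonneg_left ?_ hp0
        exact Finset.sum_le_sum_of_subset_of_nonneg hTsub fun j hj _ =>
          mul_nonneg (he j hj) (by positivity)
    _ = p * (V + ‖b‖ ^ 2) := by rw [hdecomp]
  rw [div_mul_eq_mul_div, le_div_iff₀ h1p]
  nlinarith [hchain, hV0, hp0]
end
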